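/- arXiv:2506.17555 — 2 statements merged into one kernel-verified Lean document; each statement's English description precedes it below -/
import Mathlib

section
/- Let π : (Y,S) → (X,T) be a factor map between topological dynamical systems on compact metric spaces (π continuous surjective with π∘S = T∘π). Let ℰ : M(X) → ℝ be continuous (an energy) and 𝒰 a finite open cover of X. Then for every n ≥ 1, p_n(S, ℰ∘π_*; π^{-1}𝒰) = p_n(T, ℰ; 𝒰), where p_n(T, ℰ; 𝒰) = inf { ∑_{V∈𝒱} sup_{x∈V} e^{n ℰ(Δ_x^n)} : 𝒱 is a finite Borel cover of X refining 𝒰_0^{n-1} }, and consequently P(S, ℰ∘π_*; π^{-1}𝒰) = P(T, ℰ; 𝒰). -/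
open MeasureTheory Filter Set
open scoped ENNReal NNReal Classical

set_option linter.unusedSectionVars false

variable {X : Type*} [MetricSpace X] [CompactSpace X] [MeasurableSpace X] [BorelSpace X]

/-- The empirical measure `Δ_x^n = (1/n) ∑_{i<n} δ_{T^i x}` as a `Measure`. -/
noncomputable def empMeas (T : X → X) (n : ℕ) (x : X) : Measure X :=
  (n : ℝ≥0∞)⁻¹ • ∑ i ∈ Finset.range n, Measure.dirac (T^[i] x)

theorem empMeas_prob (T : X → X) {n : ℕ} (hn : n ≠ 0) (x : X) :
    IsProbabilityMeasure (empMeas T n x) := by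
  constructor
  simp only [empMeas, Measure.smul_apply, smul_eq_mul, Measure.finset_sum_apply,
    measure_univ, Finset.sum_const, Finset.card_range, nsmul_eq_mul, mul_one]
  exact ENNReal.inv_mul_cancel (by exact_mod_cast hn) (by simp)

/-- The empirical measure as a probability measure (junk value `δ_x` for `n = 0`). -/
noncomputable def empPM (T : X → X) (n : ℕ) (x : X) : ProbabilityMeasure X :=
  if hn : n = 0 then ⟨Measure.dirac x, inferInstance⟩
  else ⟨empMeas T n x, empMeas_prob T hn x⟩

/-- The weight `e^{n ℰ(Δ_x^n)}`. -/
noncomputable def wt (T : X → X) (ℰ : ProbabilityMeasure X → ℝ) (n : ℕ) (x : X) : ℝ :=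
  Real.exp (n * ℰ (empPM T n x))

/-- Kantorovich–Rubinstein (Wasserstein-1) distance. -/
noncomputable def Wass (μ ν : Measure X) : ℝ :=
  sSup {r | ∃ g : X → ℝ, LipschitzWith 1 g ∧ r = (∫ x, g x ∂μ) - ∫ x, g x ∂ν}

/-- The dynamical join `𝒰_0^{n-1} = ⋁_{i=0}^{n-1} T^{-i} 𝒰`. -/
noncomputable def joinF (T : X → X) (𝒰 : Finset (Set X)) (n : ℕ) : Finset (Set X) :=
  (Fintype.piFinset fun _ : Fin n => 𝒰).image fun u => ⋂ i : Fin n, T^[(i : ℕ)] ⁻¹' u i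

def IsBorelCover (𝒱 : Finset (Set X)) : Prop :=
  (∀ V ∈ 𝒱, MeasurableSet V) ∧ ⋃₀ (𝒱 : Set (Set X)) = univ

def IsOpenCover (𝒰 : Finset (Set X)) : Prop :=
  (∀ U ∈ 𝒰, IsOpen U) ∧ ⋃₀ (𝒰 : Set (Set X)) = univ

/-- `𝒱` refines `𝒲`: every element of `𝒱` is contained in some element of `𝒲`. -/
def Refines (𝒱 𝒲 : Finset (Set X)) : Prop := ∀ V ∈ 𝒱, ∃ W ∈ 𝒲, V ⊆ W

def IsPartitionF (α : Finset (Set X)) : Prop :=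
  (∀ A ∈ α, MeasurableSet A) ∧ ⋃₀ (α : Set (Set X)) = univ ∧
    ∀ A ∈ α, ∀ B ∈ α, A ≠ B → Disjoint A B

noncomputable def p1 (T : X → X) (ℰ : ProbabilityMeasure X → ℝ) (𝒰 : Finset (Set X)) (n : ℕ) : ℝ :=
  sInf {r | ∃ 𝒱 : Finset (Set X), IsBorelCover 𝒱 ∧ Refines 𝒱 (joinF T 𝒰 n) ∧
    r = ∑ V ∈ 𝒱, sSup (wt T ℰ n '' V)}

noncomputable def p2 (T : X → X) (ℰ : ProbabilityMeasure X → ℝ) (𝒰 : Finset (Set X)) (n : ℕ) : ℝ :=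
  sInf {r | ∃ 𝒱 : Finset (Set X), IsBorelCover 𝒱 ∧ Refines 𝒱 (joinF T 𝒰 n) ∧
    r = ∑ V ∈ 𝒱, sInf (wt T ℰ n '' V)}

noncomputable def p3 (T : X → X) (ℰ : ProbabilityMeasure X → ℝ) (𝒰 : Finset (Set X)) (n : ℕ) : ℝ :=
  sInf {r | ∃ β : Finset (Set X), β ⊆ joinF T 𝒰 n ∧ ⋃₀ (β : Set (Set X)) = univ ∧
    r = ∑ B ∈ β, sSup (wt T ℰ n '' B)}

noncomputable def p4 (T : X → X) (ℰ : ProbabilityMeasure X → ℝ) (𝒰 : Finset (Set X)) (n : ℕ) : ℝ :=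
  sInf {r | ∃ β : Finset (Set X), β ⊆ joinF T 𝒰 n ∧ ⋃₀ (β : Set (Set X)) = univ ∧
    r = ∑ B ∈ β, sInf (wt T ℰ n '' B)}

/-- `E` is an `(n,ε)`-separated set. -/
def IsSeparated (T : X → X) (n : ℕ) (ε : ℝ) (E : Finset X) : Prop :=
  ∀ x ∈ E, ∀ y ∈ E, x ≠ y → ∃ i < n, ε ≤ dist (T^[i] x) (T^[i] y)

/-- `F` is an `(n,ε)`-spanning set. -/
def IsSpanning (T : X → X) (n : ℕ) (ε : ℝ) (F : Finset X) : Prop :=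
  ∀ x : X, ∃ y ∈ F, ∀ i < n, dist (T^[i] x) (T^[i] y) < ε

noncomputable def Pn (T : X → X) (ℰ : ProbabilityMeasure X → ℝ) (n : ℕ) (ε : ℝ) : ℝ :=
  sSup {r | ∃ E : Finset X, IsSeparated T n ε E ∧ r = ∑ x ∈ E, wt T ℰ n x}

noncomputable def Qn (T : X → X) (ℰ : ProbabilityMeasure X → ℝ) (n : ℕ) (ε : ℝ) : ℝ :=
  sInf {r | ∃ F : Finset X, IsSpanning T n ε F ∧ r = ∑ x ∈ F, wt T ℰ n x}

/-- `τ_ε`, modulus of continuity of the energy w.r.t. the Wasserstein distance. -/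
noncomputable def tauE (ℰ : ProbabilityMeasure X → ℝ) (ε : ℝ) : ℝ :=
  sSup {r | ∃ μ ν : ProbabilityMeasure X, Wass (μ : Measure X) (ν : Measure X) ≤ ε ∧
    r = |ℰ μ - ℰ ν|}

/-- Shannon entropy of a finite collection of sets. -/
noncomputable def entF (μ : Measure X) (α : Finset (Set X)) : ℝ :=
  ∑ A ∈ α, Real.negMulLog (μ A).toReal

/-- `H_μ(𝒰)`: infimum of entropies of partitions refining `𝒰`. -/
noncomputable def Hcov (μ : Measure X) (𝒰 : Finset (Set X)) : ℝ :=
  sInf {r | ∃ α : Finset (Set X), IsPartitionF α ∧ Refines α 𝒰 ∧ r = entF μ α}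

/-- Local measure-theoretic entropy `h_μ(T,𝒰)`. -/
noncomputable def hcov (T : X → X) (μ : Measure X) (𝒰 : Finset (Set X)) : ℝ :=
  Filter.atTop.limsup fun n => Hcov μ (joinF T 𝒰 n) / n

/-!
The weight of `S` is the weight of `T` composed with `π`, since `π` carries the empirical
measures of `S` to those of `T`; likewise the join of `π⁻¹𝒰` is the preimage of the join of `𝒰`.
Pulling a cover of `X` back along the surjection `π` preserves its sum. Conversely each `V` in
a cover of `Y`, with `V ⊆ π⁻¹ W` for `W` in the join, is pushed forward to `W ∩ closure (π '' V)`: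
this is Borel although `π '' V` need not be, and by continuity of the weight its supremum is no
larger.
-/

theorem sSup_image_le_of_subset_closure {α : Type*} [TopologicalSpace α] [CompactSpace α]
    {f : α → ℝ} (hf : Continuous f) (hf₀ : ∀ x, 0 ≤ f x) {A B : Set α}
    (hAB : A ⊆ closure B) : sSup (f '' A) ≤ sSup (f '' B) := by
  have hbdd : BddAbove (f '' B) := (isCompact_range hf).bddAbove.mono (image_subset_range f B)
  have hclosed : IsClosed {x | f x ≤ sSup (f '' B)} := isClosed_le hf continuous_const
  have hB : B ⊆ {x | f x ≤ sSup (f '' B)} := fun x hx => le_csSup hbdd (mem_image_of_mem f hx)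
  refine Real.sSup_le ?_ (Real.sSup_nonneg (by rintro _ ⟨x, -, rfl⟩; exact hf₀ x))
  rintro _ ⟨x, hx, rfl⟩
  exact hclosed.closure_subset_iff.mpr hB (hAB hx)

theorem sum_sSup_image_preimage {α β : Type*} {π : β → α} (hπ : Function.Surjective π)
    (f : α → ℝ) (𝒱 : Finset (Set α)) :
    ∑ V ∈ 𝒱.image (fun V => π ⁻¹' V), sSup ((f ∘ π) '' V) = ∑ V ∈ 𝒱, sSup (f '' V) := by
  rw [Finset.sum_image fun _ _ _ _ h => hπ.preimage_injective h]
  refine Finset.sum_congr rfl fun V _ => ?_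
  rw [image_comp, image_preimage_eq V hπ]

theorem exists_isBorelCover_sum_sSup_le {β : Type*} {π : β → X} (hπ : Function.Surjective π)
    {𝒲 : Finset (Set X)} (h𝒲 : ∀ W ∈ 𝒲, MeasurableSet W) {𝒱 : Finset (Set β)}
    (h𝒱 : ⋃₀ (𝒱 : Set (Set β)) = univ) (href : ∀ V ∈ 𝒱, ∃ W ∈ 𝒲, V ⊆ π ⁻¹' W)
    {f : X → ℝ} (hf : Continuous f) (hf₀ : ∀ x, 0 ≤ f x) :
    ∃ 𝒱' : Finset (Set X), IsBorelCover 𝒱' ∧ Refines 𝒱' 𝒲 ∧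
      ∑ V ∈ 𝒱', sSup (f '' V) ≤ ∑ V ∈ 𝒱, sSup ((f ∘ π) '' V) := by
  classical
  choose! W hW hVW using href
  refine ⟨𝒱.image fun V => W V ∩ closure (π '' V), ⟨?_, ?_⟩, ?_, ?_⟩
  · simp only [Finset.mem_image]
    rintro _ ⟨V, hV, rfl⟩
    exact (h𝒲 _ (hW V hV)).inter isClosed_closure.measurableSet
  · refine eq_univ_of_forall fun x => ?_
    obtain ⟨y, rfl⟩ := hπ x
    obtain ⟨V, hV, hyV⟩ := mem_sUnion.mp (h𝒱.symm ▸ mem_univ y : y ∈ ⋃₀ (𝒱 : Set (Set β)))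
    exact mem_sUnion.mpr ⟨_, Finset.mem_coe.mpr (Finset.mem_image_of_mem _ hV),
      hVW V hV hyV, subset_closure (mem_image_of_mem π hyV)⟩
  · simp only [Refines, Finset.mem_image]
    rintro _ ⟨V, hV, rfl⟩
    exact ⟨W V, hW V hV, inter_subset_left⟩
  · calc ∑ V ∈ 𝒱.image (fun V => W V ∩ closure (π '' V)), sSup (f '' V)
        ≤ ∑ V ∈ 𝒱, sSup (f '' (W V ∩ closure (π '' V))) :=
          Finset.sum_image_le_of_nonneg fun _ _ =>
            Real.sSup_nonneg (by rintro _ ⟨x, -, rfl⟩; exact hf₀ x)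
      _ ≤ ∑ V ∈ 𝒱, sSup ((f ∘ π) '' V) := Finset.sum_le_sum fun V _ => by
          rw [image_comp]
          exact sSup_image_le_of_subset_closure hf hf₀ inter_subset_right

theorem wt_pos (T : X → X) (ℰ : ProbabilityMeasure X → ℝ) (n : ℕ) (x : X) : 0 < wt T ℰ n x :=
  Real.exp_pos _

theorem coe_empPM_zero (T : X → X) (x : X) : (empPM T 0 x : Measure X) = Measure.dirac x := by
  simp [empPM]

theorem coe_empPM {T : X → X} {n : ℕ} (hn : n ≠ 0) (x : X) :
    (empPM T n x : Measure X) = empMeas T n x := by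
  simp [empPM, hn]

theorem empPM_continuous {T : X → X} (hT : Continuous T) {n : ℕ} (hn : n ≠ 0) :
    Continuous (empPM T n) := by
  have hint : ∀ (f : BoundedContinuousFunction X ℝ) x, ∫ ω, f ω ∂(empPM T n x : Measure X)
      = ((n : ℝ≥0∞)⁻¹).toReal * ∑ i ∈ Finset.range n, f (T^[i] x) := by
    intro f x
    simp [coe_empPM hn, empMeas, integral_finsetSum_measure fun i _ => f.integrable _]
  refine continuous_iff_continuousAt.mpr fun x => ?_
  refine ProbabilityMeasure.tendsto_iff_forall_integral_tendsto.mpr fun f => ?_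
  simp_rw [hint]
  exact (continuous_const.mul (continuous_finsetSum _ fun i _ =>
    f.continuous.comp (hT.iterate i))).continuousAt

theorem wt_continuous {T : X → X} (hT : Continuous T) {ℰ : ProbabilityMeasure X → ℝ}
    (hE : Continuous ℰ) (n : ℕ) : Continuous (wt T ℰ n) := by
  rcases eq_or_ne n 0 with rfl | hn
  · have hconst : wt T ℰ 0 = fun _ => 1 := funext fun x => by simp [wt]
    exact hconst ▸ continuous_const
  · exact Real.continuous_exp.comp (continuous_const.mul (hE.comp (empPM_continuous hT hn)))

theorem IsOpenCover.isBorelCover_joinF {T : X → X} (hT : Continuous T) {𝒰 : Finset (Set X)}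
    (h𝒰 : IsOpenCover 𝒰) (n : ℕ) : IsBorelCover (joinF T 𝒰 n) := by
  refine ⟨?_, eq_univ_of_forall fun x => ?_⟩
  · simp only [joinF, Finset.mem_image, Fintype.mem_piFinset]
    rintro _ ⟨u, hu, rfl⟩
    exact (isOpen_iInter_of_finite fun i => (h𝒰.1 _ (hu i)).preimage (hT.iterate i)).measurableSet
  · have hcov : ∀ i : Fin n, ∃ U ∈ 𝒰, T^[i] x ∈ U := fun i =>
      mem_sUnion.mp (h𝒰.2 ▸ mem_univ (T^[i] x))
    choose u hu hxu using hcov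
    refine mem_sUnion.mpr ⟨_, ?_, mem_iInter.mpr fun i => mem_preimage.mpr (hxu i)⟩
    exact Finset.mem_coe.mpr (Finset.mem_image.mpr ⟨u, Fintype.mem_piFinset.mpr hu, rfl⟩)

theorem sSup_wt_nonneg (T : X → X) (ℰ : ProbabilityMeasure X → ℝ) (n : ℕ) (V : Set X) :
    0 ≤ sSup (wt T ℰ n '' V) :=
  Real.sSup_nonneg (by rintro _ ⟨x, -, rfl⟩; exact (wt_pos T ℰ n x).le)

theorem p1_le_sum {T : X → X} {ℰ : ProbabilityMeasure X → ℝ} {𝒰 𝒱 : Finset (Set X)} {n : ℕ}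
    (h𝒱 : IsBorelCover 𝒱) (href : Refines 𝒱 (joinF T 𝒰 n)) :
    p1 T ℰ 𝒰 n ≤ ∑ V ∈ 𝒱, sSup (wt T ℰ n '' V) := by
  refine csInf_le ⟨0, ?_⟩ ⟨𝒱, h𝒱, href, rfl⟩
  rintro _ ⟨𝒱, -, -, rfl⟩
  exact Finset.sum_nonneg fun V _ => sSup_wt_nonneg T ℰ n V

theorem le_p1 {T : X → X} {ℰ : ProbabilityMeasure X → ℝ} {𝒰 : Finset (Set X)} {n : ℕ} {c : ℝ}
    (hne : ∃ 𝒱, IsBorelCover 𝒱 ∧ Refines 𝒱 (joinF T 𝒰 n))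
    (h : ∀ 𝒱, IsBorelCover 𝒱 → Refines 𝒱 (joinF T 𝒰 n) → c ≤ ∑ V ∈ 𝒱, sSup (wt T ℰ n '' V)) :
    c ≤ p1 T ℰ 𝒰 n := by
  obtain ⟨𝒱, h𝒱, href⟩ := hne
  refine le_csInf ⟨_, 𝒱, h𝒱, href, rfl⟩ ?_
  rintro _ ⟨𝒱, h𝒱, href, rfl⟩
  exact h 𝒱 h𝒱 href

section Factor

variable {Y : Type*} [MetricSpace Y] [CompactSpace Y] [MeasurableSpace Y] [BorelSpace Y]
  {T : X → X} {S : Y → Y} {π : Y → X}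

theorem IsBorelCover.image_preimage (hπ : Measurable π) {𝒱 : Finset (Set X)}
    (h𝒱 : IsBorelCover 𝒱) : IsBorelCover (𝒱.image fun V => π ⁻¹' V) := by
  refine ⟨?_, ?_⟩
  · simp only [Finset.mem_image]
    rintro _ ⟨V, hV, rfl⟩
    exact hπ (h𝒱.1 V hV)
  · rw [Finset.coe_image, sUnion_image, ← preimage_iUnion₂, ← sUnion_eq_biUnion, h𝒱.2,
      preimage_univ]

theorem Refines.image_preimage {𝒱 𝒲 : Finset (Set X)} (h : Refines 𝒱 𝒲) :
    Refines (𝒱.image fun V => π ⁻¹' V) (𝒲.image fun W => π ⁻¹' W) := by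
  simp only [Refines, Finset.mem_image]
  rintro _ ⟨V, hV, rfl⟩
  obtain ⟨W, hW, hVW⟩ := h V hV
  exact ⟨_, ⟨W, hW, rfl⟩, preimage_mono hVW⟩

theorem empPM_map (hπ : Measurable π) (h : Function.Semiconj π S T) (n : ℕ) (y : Y) :
    (empPM S n y).map hπ.aemeasurable = empPM T n (π y) := by
  apply ProbabilityMeasure.toMeasure_injective
  rw [ProbabilityMeasure.toMeasure_map]
  rcases eq_or_ne n 0 with rfl | hn
  · rw [coe_empPM_zero, coe_empPM_zero, Measure.map_dirac' hπ]
  · rw [coe_empPM hn, coe_empPM hn, empMeas, empMeas, Measure.map_smul,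
      Measure.map_finset_sum hπ.aemeasurable]
    simp_rw [Measure.map_dirac' hπ, (h.iterate_right _) y]

theorem wt_factor (hπ : Measurable π) (h : Function.Semiconj π S T)
    (ℰ : ProbabilityMeasure X → ℝ) (n : ℕ) :
    wt S (fun ν => ℰ (ν.map hπ.aemeasurable)) n = wt T ℰ n ∘ π :=
  funext fun y => by simp only [wt, Function.comp_apply, empPM_map hπ h]

theorem joinF_image_preimage (h : Function.Semiconj π S T) (𝒰 : Finset (Set X)) (n : ℕ) :
    joinF S (𝒰.image fun U => π ⁻¹' U) n = (joinF T 𝒰 n).image fun W => π ⁻¹' W := by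
  have hpre : ∀ u : Fin n → Set X,
      ⋂ i : Fin n, S^[i] ⁻¹' (π ⁻¹' u i) = π ⁻¹' ⋂ i : Fin n, T^[i] ⁻¹' u i := fun u => by
    simp only [preimage_iInter, ← preimage_comp, (h.iterate_right _).comp_eq]
  ext V
  simp only [joinF, Finset.mem_image, Fintype.mem_piFinset]
  constructor
  · rintro ⟨u', hu', rfl⟩
    choose u hu hu'u using hu'
    exact ⟨_, ⟨u, hu, rfl⟩, by simp only [← hpre, hu'u]⟩
  · rintro ⟨_, ⟨u, hu, rfl⟩, rfl⟩
    exact ⟨fun i => π ⁻¹' u i, fun i => ⟨u i, hu i, rfl⟩, hpre u⟩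

theorem p1_factor (hT : Continuous T) (hπ : Continuous π) (hsurj : Function.Surjective π)
    (h : Function.Semiconj π S T) {ℰ : ProbabilityMeasure X → ℝ} (hE : Continuous ℰ)
    {𝒰 : Finset (Set X)} (h𝒰 : IsOpenCover 𝒰) (n : ℕ) :
    p1 S (fun ν => ℰ (ν.map hπ.measurable.aemeasurable)) (𝒰.image fun U => π ⁻¹' U) n =
      p1 T ℰ 𝒰 n := by
  have hjoin := joinF_image_preimage h 𝒰 n
  have hX := h𝒰.isBorelCover_joinF hT n
  have hrefl : Refines (joinF T 𝒰 n) (joinF T 𝒰 n) := fun W hW => ⟨W, hW, subset_rfl⟩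
  apply le_antisymm
  · refine le_p1 ⟨_, hX, hrefl⟩ fun 𝒱 h𝒱 href => ?_
    rw [← sum_sSup_image_preimage hsurj, ← wt_factor hπ.measurable h]
    exact p1_le_sum (h𝒱.image_preimage hπ.measurable) (hjoin ▸ href.image_preimage)
  · refine le_p1 ⟨_, hX.image_preimage hπ.measurable, hjoin ▸ hrefl.image_preimage⟩
      fun 𝒱 h𝒱 href => ?_
    have href' : ∀ V ∈ 𝒱, ∃ W ∈ joinF T 𝒰 n, V ⊆ π ⁻¹' W := by
      simpa [Refines, hjoin] using href
    obtain ⟨𝒱', h𝒱', href'', hle⟩ := exists_isBorelCover_sum_sSup_le hsurj hX.1 h𝒱.2 href'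
      (wt_continuous hT hE n) fun x => (wt_pos T ℰ n x).le
    rw [wt_factor hπ.measurable h]
    exact (p1_le_sum h𝒱' href'').trans hle

end Factor

theorem p_n_factor_invariance_general {Y : Type*} [MetricSpace Y] [CompactSpace Y]
    [MeasurableSpace Y] [BorelSpace Y]
    (T : X → X) (hT : Continuous T) (S : Y → Y)
    (π : Y → X) (hπ : Continuous π) (hsurj : Function.Surjective π)
    (hcomm : π ∘ S = T ∘ π)
    (ℰ : ProbabilityMeasure X → ℝ) (hE : Continuous ℰ)
    (𝒰 : Finset (Set X)) (h𝒰 : IsOpenCover 𝒰) :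
    (∀ n : ℕ, 1 ≤ n →
      p1 S (fun ν : ProbabilityMeasure Y => ℰ (ν.map hπ.measurable.aemeasurable))
        (𝒰.image fun U => π ⁻¹' U) n = p1 T ℰ 𝒰 n) ∧
    Filter.atTop.limsup (fun n =>
        Real.log (p1 S (fun ν : ProbabilityMeasure Y => ℰ (ν.map hπ.measurable.aemeasurable))
          (𝒰.image fun U => π ⁻¹' U) n) / n) =
      Filter.atTop.limsup (fun n => Real.log (p1 T ℰ 𝒰 n) / n) := by
  have hp1 := p1_factor hT hπ hsurj (Function.semiconj_iff_comp_eq.mpr hcomm) hE h𝒰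
  exact ⟨fun n _ => hp1 n, by simp_rw [hp1]⟩

/-- invariance of the nonlinear local pressure under factor maps. -/
theorem p_n_factor_invariance {Y : Type*} [MetricSpace Y] [CompactSpace Y]
    [MeasurableSpace Y] [BorelSpace Y]
    (T : X → X) (hT : Continuous T) (S : Y → Y) (hS : Continuous S)
    (π : Y → X) (hπ : Continuous π) (hsurj : Function.Surjective π)
    (hcomm : π ∘ S = T ∘ π)
    (ℰ : ProbabilityMeasure X → ℝ) (hE : Continuous ℰ)
    (𝒰 : Finset (Set X)) (h𝒰 : IsOpenCover 𝒰) :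
    (∀ n : ℕ, 1 ≤ n →
      p1 S (fun ν : ProbabilityMeasure Y => ℰ (ν.map hπ.measurable.aemeasurable))
        (𝒰.image fun U => π ⁻¹' U) n = p1 T ℰ 𝒰 n) ∧
    Filter.atTop.limsup (fun n =>
        Real.log (p1 S (fun ν : ProbabilityMeasure Y => ℰ (ν.map hπ.measurable.aemeasurable))
          (𝒰.image fun U => π ⁻¹' U) n) / n) =
      Filter.atTop.limsup (fun n => Real.log (p1 T ℰ 𝒰 n) / n) :=
  p_n_factor_invariance_general T hT S π hπ hsurj hcomm ℰ hE 𝒰 h𝒰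
end

section
/- Let (X,T) be a topological dynamical system, ℰ an energy, 𝒰 a finite open cover with Lebesgue number δ > 0. If F is an (n,δ/2)-spanning set of X, then there is a finite subcover β of 𝒰_0^{n-1} such that ∑_{B∈β} inf_{x∈B} e^{nℰ(Δ_x^n)} ≤ ∑_{x∈F} e^{nℰ(Δ_x^n)}. In particular, p⁴_n(T,ℰ;𝒰) ≤ Q_n(T,ℰ,δ/2). -/
open MeasureTheory Filter Set
open scoped ENNReal NNReal Classical

set_option linter.unusedSectionVars false

variable {X : Type*} [MetricSpace X] [CompactSpace X] [MeasurableSpace X] [BorelSpace X]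

section BowenBall

variable {Y : Type*} [PseudoMetricSpace Y]

def bowenBall (T : Y → Y) (n : ℕ) (x : Y) (ρ : ℝ) : Set Y :=
  {y | ∀ i < n, dist (T^[i] y) (T^[i] x) < ρ}

theorem mem_bowenBall_self (T : Y → Y) (n : ℕ) (x : Y) {ρ : ℝ} (hρ : 0 < ρ) :
    x ∈ bowenBall T n x ρ :=
  fun i _ => by rwa [dist_self]

theorem bowenBall_mono (T : Y → Y) (n : ℕ) (x : Y) {ρ ρ' : ℝ} (h : ρ ≤ ρ') :
    bowenBall T n x ρ ⊆ bowenBall T n x ρ' :=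
  fun _ hy i hi => (hy i hi).trans_le h

theorem exists_mem_joinF_bowenBall_subset {T : Y → Y} {𝒰 : Finset (Set Y)} {δ : ℝ}
    (hleb : ∀ x : Y, ∃ U ∈ 𝒰, Metric.ball x δ ⊆ U) (n : ℕ) (x : Y) :
    ∃ B ∈ joinF T 𝒰 n, bowenBall T n x δ ⊆ B := by
  choose u hu hball using hleb
  refine ⟨⋂ i : Fin n, T^[i] ⁻¹' u (T^[i] x), ?_, ?_⟩
  · exact Finset.mem_image.2 ⟨fun i => u (T^[i] x), Fintype.mem_piFinset.2 fun i => hu _, rfl⟩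
  · exact fun y hy => Set.mem_iInter.2 fun i => hball _ (hy i i.2)

end BowenBall

theorem Finset.sum_sInf_image_image_le {α : Type*} {w : α → ℝ} (hw : ∀ x, 0 ≤ w x)
    (s : Finset α) (c : α → Set α) (hc : ∀ x ∈ s, x ∈ c x) :
    ∑ B ∈ s.image c, sInf (w '' B) ≤ ∑ x ∈ s, w x := by
  have hbdd : ∀ B, BddBelow (w '' B) := fun B => ⟨0, by rintro _ ⟨y, -, rfl⟩; exact hw y⟩
  calc ∑ B ∈ s.image c, sInf (w '' B)
      ≤ ∑ x ∈ s, sInf (w '' c x) :=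
        Finset.sum_image_le_of_nonneg fun x _ => Real.sInf_nonneg <| by
          rintro _ ⟨y, -, rfl⟩; exact hw y
    _ ≤ ∑ x ∈ s, w x :=
        Finset.sum_le_sum fun x hx => csInf_le (hbdd _) ⟨x, hc x hx, rfl⟩

theorem p4_le_sum_sInf_wt {T : X → X} {ℰ : ProbabilityMeasure X → ℝ} {𝒰 : Finset (Set X)}
    {n : ℕ} {β : Finset (Set X)} (hβ : β ⊆ joinF T 𝒰 n) (hcover : ⋃₀ (β : Set (Set X)) = univ) :
    p4 T ℰ 𝒰 n ≤ ∑ B ∈ β, sInf (wt T ℰ n '' B) := by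
  refine csInf_le ⟨0, ?_⟩ ⟨β, hβ, hcover, rfl⟩
  rintro _ ⟨β', -, -, rfl⟩
  refine Finset.sum_nonneg fun B _ => Real.sInf_nonneg ?_
  rintro _ ⟨x, -, rfl⟩
  exact (wt_pos T ℰ n x).le

/-- The subcover is formed by the elements of `𝒰_0^{n-1}` containing the Bowen balls
`B_n(x, δ)`, `x ∈ F`; each one is charged to its centre. -/
theorem exists_subcover_joinF_sum_sInf_wt_le {T : X → X} (ℰ : ProbabilityMeasure X → ℝ)
    {𝒰 : Finset (Set X)} {δ : ℝ} (hδ : 0 < δ) (hleb : ∀ x : X, ∃ U ∈ 𝒰, Metric.ball x δ ⊆ U)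
    {n : ℕ} {F : Finset X} (hspan : IsSpanning T n (δ / 2) F) :
    ∃ β : Finset (Set X), β ⊆ joinF T 𝒰 n ∧ ⋃₀ (β : Set (Set X)) = univ ∧
      ∑ B ∈ β, sInf (wt T ℰ n '' B) ≤ ∑ x ∈ F, wt T ℰ n x := by
  choose c hc hball using exists_mem_joinF_bowenBall_subset (T := T) hleb n
  refine ⟨F.image c, fun B hB => ?_, Set.eq_univ_of_forall fun y => ?_, ?_⟩
  · obtain ⟨x, -, rfl⟩ := Finset.mem_image.1 hB
    exact hc x
  · obtain ⟨x, hxF, hyx⟩ := hspan y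
    refine ⟨c x, Finset.mem_coe.2 (Finset.mem_image_of_mem c hxF), hball x ?_⟩
    exact bowenBall_mono T n x (half_le_self hδ.le) hyx
  · exact Finset.sum_sInf_image_image_le (fun x => (wt_pos T ℰ n x).le) F c
      fun x _ => hball x (mem_bowenBall_self T n x hδ)

theorem p4_le_Qn_general (T : X → X)
    (ℰ : ProbabilityMeasure X → ℝ)
    (𝒰 : Finset (Set X))
    (δ : ℝ) (hδ : 0 < δ) (hleb : ∀ x : X, ∃ U ∈ 𝒰, Metric.ball x δ ⊆ U)
    (n : ℕ) (F : Finset X) (hspan : IsSpanning T n (δ / 2) F) :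
    (∃ β : Finset (Set X), β ⊆ joinF T 𝒰 n ∧ ⋃₀ (β : Set (Set X)) = univ ∧
      ∑ B ∈ β, sInf (wt T ℰ n '' B) ≤ ∑ x ∈ F, wt T ℰ n x) ∧
    p4 T ℰ 𝒰 n ≤ Qn T ℰ n (δ / 2) := by
  refine ⟨exists_subcover_joinF_sum_sInf_wt_le ℰ hδ hleb hspan,
    le_csInf ⟨_, F, hspan, rfl⟩ ?_⟩
  rintro _ ⟨F', hF', rfl⟩
  obtain ⟨β, hβ, hcover, hle⟩ := exists_subcover_joinF_sum_sInf_wt_le ℰ hδ hleb hF'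
  exact (p4_le_sum_sInf_wt hβ hcover).trans hle

/-- every `(n,δ/2)`-spanning set dominates a subcover of `𝒰_0^{n-1}`;
in particular `p⁴_n(T,ℰ;𝒰) ≤ Q_n(T,ℰ,δ/2)`. -/
theorem p4_le_Qn (T : X → X) (hT : Continuous T)
    (ℰ : ProbabilityMeasure X → ℝ) (hE : Continuous ℰ)
    (𝒰 : Finset (Set X)) (h𝒰 : IsOpenCover 𝒰)
    (δ : ℝ) (hδ : 0 < δ) (hleb : ∀ x : X, ∃ U ∈ 𝒰, Metric.ball x δ ⊆ U)
    (n : ℕ) (hn : 1 ≤ n) (F : Finset X) (hspan : IsSpanning T n (δ / 2) F) :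
    (∃ β : Finset (Set X), β ⊆ joinF T 𝒰 n ∧ ⋃₀ (β : Set (Set X)) = univ ∧
      ∑ B ∈ β, sInf (wt T ℰ n '' B) ≤ ∑ x ∈ F, wt T ℰ n x) ∧
    p4 T ℰ 𝒰 n ≤ Qn T ℰ n (δ / 2) :=
  p4_le_Qn_general T ℰ 𝒰 δ hδ hleb n F hspan
end
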